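/- Let G = (V, ω) be a finite weighted graph with vertex measure μ, let h, f : V → ℝ with f_i > 0 for all i, and let α ≥ p > 1. Set β = inf{I(φ) : φ ≥ 0, φ ≢ 0}. Then there exists φ̂ : V → ℝ with φ̂ ≥ 0, ∫_V f φ̂^α dμ = 1 (in particular φ̂ ≢ 0), and I(φ̂) = β; i.e. the infimum of the energy functional is attained. -/

import Mathlib

/-!
Both terms of the numerator of `I` are `p`-homogeneous and the denominator is `α`-homogeneous
with exponent `-p/α`, so `I` is invariant under `φ ↦ cφ` for `c > 0`. Every admissible `φ` can
therefore be rescaled onto `{φ ≥ 0, ∫_V f φ^α dμ = 1}`, a compact set on which `I` is the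
continuous numerator; a minimiser of the numerator there realises the infimum.
-/

/-- The gradient energy `∫_E |∇φ|^p dω = (1/2) ∑_{i,j} ω_ij |φ_j − φ_i|^p`. -/
noncomputable def gradEnergy {V : Type*} [Fintype V] (ω : V → V → ℝ) (p : ℝ)
    (φ : V → ℝ) : ℝ :=
  (1 / 2) * ∑ i, ∑ j, ω i j * |φ j - φ i| ^ p

/-- The energy functional
`I(φ) = (∫_E |∇φ|^p dω − ∫_V h φ^p dμ) (∫_V f φ^α dμ)^{−p/α}`. -/
noncomputable def energy {V : Type*} [Fintype V] (μ : V → ℝ) (ω : V → V → ℝ)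
    (h f : V → ℝ) (p α : ℝ) (φ : V → ℝ) : ℝ :=
  (gradEnergy ω p φ - ∑ i, μ i * (h i * φ i ^ p)) *
    (∑ i, μ i * (f i * φ i ^ α)) ^ (-(p / α))

open Finset

section Homogeneity

variable {V : Type*} [Fintype V]

/-- `∫_V g φ^q dμ`. -/
noncomputable def weightedPowSum (μ g : V → ℝ) (q : ℝ) (φ : V → ℝ) : ℝ :=
  ∑ i, μ i * (g i * φ i ^ q)

lemma energy_eq_weightedPowSum (μ : V → ℝ) (ω : V → V → ℝ) (h f : V → ℝ) (p α : ℝ)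
    (φ : V → ℝ) :
    energy μ ω h f p α φ =
      (gradEnergy ω p φ - weightedPowSum μ h p φ) * weightedPowSum μ f α φ ^ (-(p / α)) :=
  rfl

lemma gradEnergy_smul (ω : V → V → ℝ) (p : ℝ) (φ : V → ℝ) {c : ℝ} (hc : 0 ≤ c) :
    gradEnergy ω p (c • φ) = c ^ p * gradEnergy ω p φ := by
  have hterm : ∀ i j,
      ω i j * |(c • φ) j - (c • φ) i| ^ p = c ^ p * (ω i j * |φ j - φ i| ^ p) := by
    intro i j
    rw [Pi.smul_apply, Pi.smul_apply, smul_eq_mul, smul_eq_mul, ← mul_sub, abs_mul,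
      abs_of_nonneg hc, Real.mul_rpow hc (abs_nonneg _)]
    ring
  simp only [gradEnergy, hterm, ← mul_sum]
  ring

lemma weightedPowSum_smul (μ g : V → ℝ) (q : ℝ) {φ : V → ℝ} (hφ : 0 ≤ φ) {c : ℝ}
    (hc : 0 ≤ c) :
    weightedPowSum μ g q (c • φ) = c ^ q * weightedPowSum μ g q φ := by
  rw [weightedPowSum, weightedPowSum, mul_sum]
  refine sum_congr rfl fun i _ => ?_
  rw [Pi.smul_apply, smul_eq_mul, Real.mul_rpow hc (hφ i)]
  ring

lemma energy_smul (μ : V → ℝ) (ω : V → V → ℝ) (h f : V → ℝ) {p α : ℝ} (hα : α ≠ 0)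
    {φ : V → ℝ} (hφ : 0 ≤ φ) (hS : 0 ≤ weightedPowSum μ f α φ) {c : ℝ} (hc : 0 < c) :
    energy μ ω h f p α (c • φ) = energy μ ω h f p α φ := by
  have hexp : p + α * -(p / α) = 0 := by field_simp; ring
  rw [energy_eq_weightedPowSum, energy_eq_weightedPowSum, gradEnergy_smul ω p φ hc.le,
    weightedPowSum_smul μ h p hφ hc.le, weightedPowSum_smul μ f α hφ hc.le, ← mul_sub,
    Real.mul_rpow (Real.rpow_nonneg hc.le α) hS, ← Real.rpow_mul hc.le, mul_mul_mul_comm,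
    ← Real.rpow_add hc, hexp, Real.rpow_zero, one_mul]

end Homogeneity

section Positivity

variable {V : Type*} [Fintype V] {μ f : V → ℝ} (hμ : ∀ i, 0 < μ i) (hf : ∀ i, 0 < f i)
include hμ hf

lemma weightedPowSum_pos (α : ℝ) {φ : V → ℝ} (hφ : 0 ≤ φ) (hφ0 : φ ≠ 0) :
    0 < weightedPowSum μ f α φ := by
  obtain ⟨i, hi⟩ := Function.ne_iff.mp hφ0
  have hφi : 0 < φ i := (hφ i).lt_of_ne' hi
  exact sum_pos' (fun j _ => mul_nonneg (hμ j).le (mul_nonneg (hf j).le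
      (Real.rpow_nonneg (hφ j) α)))
    ⟨i, mem_univ i, mul_pos (hμ i) (mul_pos (hf i) (Real.rpow_pos_of_pos hφi α))⟩

lemma le_of_weightedPowSum_eq_one {α : ℝ} (hα : 0 < α) {φ : V → ℝ} (hφ : 0 ≤ φ)
    (hS : weightedPowSum μ f α φ = 1) (i : V) : φ i ≤ (μ i * f i)⁻¹ ^ α⁻¹ := by
  have hμf : 0 < μ i * f i := mul_pos (hμ i) (hf i)
  have hterm : μ i * f i * φ i ^ α ≤ 1 := by
    rw [← hS, mul_assoc]
    exact single_le_sum (f := fun j => μ j * (f j * φ j ^ α))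
      (fun j _ => mul_nonneg (hμ j).le (mul_nonneg (hf j).le (Real.rpow_nonneg (hφ j) α)))
      (mem_univ i)
  rw [Real.le_rpow_inv_iff_of_pos (hφ i) (inv_nonneg.mpr hμf.le) hα, ← mul_one (μ i * f i)⁻¹,
    le_inv_mul_iff₀ hμf]
  exact hterm

end Positivity

section Normalization

variable {V : Type*} [Fintype V]

def normalizedSet (μ f : V → ℝ) (α : ℝ) : Set (V → ℝ) :=
  {φ | 0 ≤ φ ∧ weightedPowSum μ f α φ = 1}

lemma energy_eq_of_mem_normalizedSet (μ : V → ℝ) (ω : V → V → ℝ) (h f : V → ℝ) (p α : ℝ)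
    {φ : V → ℝ} (hφ : φ ∈ normalizedSet μ f α) :
    energy μ ω h f p α φ = gradEnergy ω p φ - weightedPowSum μ h p φ := by
  rw [energy_eq_weightedPowSum, hφ.2, Real.one_rpow, mul_one]

lemma ne_zero_of_mem_normalizedSet {μ f : V → ℝ} {α : ℝ} (hα : α ≠ 0) {φ : V → ℝ}
    (hφ : φ ∈ normalizedSet μ f α) : φ ≠ 0 := by
  rintro rfl
  simpa [weightedPowSum, Real.zero_rpow hα] using hφ.2

variable {μ f : V → ℝ} (hμ : ∀ i, 0 < μ i) (hf : ∀ i, 0 < f i) {α : ℝ} (hα : 0 < α)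
include hμ hf hα

lemma exists_mem_normalizedSet_energy_eq (ω : V → V → ℝ) (h : V → ℝ) (p : ℝ) {φ : V → ℝ}
    (hφ : 0 ≤ φ) (hφ0 : φ ≠ 0) :
    ∃ ψ ∈ normalizedSet μ f α, energy μ ω h f p α ψ = energy μ ω h f p α φ := by
  set S := weightedPowSum μ f α φ
  have hS : 0 < S := weightedPowSum_pos hμ hf α hφ hφ0
  have hc : 0 < S ^ (-α⁻¹) := Real.rpow_pos_of_pos hS _
  refine ⟨S ^ (-α⁻¹) • φ, ⟨smul_nonneg hc.le hφ, ?_⟩, energy_smul μ ω h f hα.ne' hφ hS.le hc⟩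
  rw [weightedPowSum_smul μ f α hφ hc.le, ← Real.rpow_mul hS.le, neg_mul,
    inv_mul_cancel₀ hα.ne', Real.rpow_neg_one, inv_mul_cancel₀ hS.ne']

lemma normalizedSet_nonempty [Nonempty V] : (normalizedSet μ f α).Nonempty := by
  obtain ⟨ψ, hψ, -⟩ := exists_mem_normalizedSet_energy_eq hμ hf hα 0 0 0
    (zero_le_one' (V → ℝ)) one_ne_zero
  exact ⟨ψ, hψ⟩

lemma isCompact_normalizedSet : IsCompact (normalizedSet μ f α) := by
  have hcont : Continuous (weightedPowSum μ f α) :=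
    continuous_finsetSum _ fun i _ => continuous_const.mul <| continuous_const.mul <|
      (Real.continuous_rpow_const hα.le).comp (continuous_apply i)
  have hclosed : IsClosed (normalizedSet μ f α) :=
    (isClosed_le continuous_const continuous_id).inter (isClosed_eq hcont continuous_const)
  exact isCompact_Icc.of_isClosed_subset hclosed fun φ hφ =>
    ⟨hφ.1, le_of_weightedPowSum_eq_one hμ hf hα hφ.1 hφ.2⟩

end Normalization

lemma continuous_energy_numerator {V : Type*} [Fintype V] (μ : V → ℝ) (ω : V → V → ℝ)
    (h : V → ℝ) {p : ℝ} (hp : 0 ≤ p) :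
    Continuous fun φ : V → ℝ => gradEnergy ω p φ - weightedPowSum μ h p φ := by
  have cp := Real.continuous_rpow_const hp
  refine Continuous.sub ?_ ?_
  · exact continuous_const.mul <| continuous_finsetSum _ fun i _ =>
      continuous_finsetSum _ fun j _ => continuous_const.mul <|
        cp.comp ((continuous_apply j).sub (continuous_apply i)).abs
  · exact continuous_finsetSum _ fun i _ => continuous_const.mul <|
      continuous_const.mul <| cp.comp (continuous_apply i)

theorem energy_infimum_attained_general
    {V : Type*} [Fintype V] [Nonempty V]
    (μ : V → ℝ) (hμ : ∀ i, 0 < μ i)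
    (ω : V → V → ℝ)
    (h f : V → ℝ) (hf : ∀ i, 0 < f i)
    (p α : ℝ) (hp : 1 < p) (hpα : p ≤ α) :
    ∃ φhat : V → ℝ, (∀ i, 0 ≤ φhat i) ∧
      (∑ i, μ i * (f i * φhat i ^ α) = 1) ∧
      energy μ ω h f p α φhat =
        sInf {y : ℝ | ∃ φ : V → ℝ, (∀ i, 0 ≤ φ i) ∧ φ ≠ 0 ∧
          energy μ ω h f p α φ = y} := by
  have hα : 0 < α := by linarith
  obtain ⟨φhat, hφhat, hmin⟩ := (isCompact_normalizedSet hμ hf hα).exists_isMinOn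
    (normalizedSet_nonempty hμ hf hα)
    (continuous_energy_numerator μ ω h (p := p) (by linarith)).continuousOn
  have hφhat0 := ne_zero_of_mem_normalizedSet hα.ne' hφhat
  refine ⟨φhat, hφhat.1, hφhat.2, Eq.symm <| IsLeast.csInf_eq ⟨⟨φhat, hφhat.1, hφhat0, rfl⟩, ?_⟩⟩
  rintro _ ⟨φ, hφ, hφ0, rfl⟩
  obtain ⟨ψ, hψ, hψφ⟩ := exists_mem_normalizedSet_energy_eq hμ hf hα ω h p hφ hφ0
  rw [← hψφ, energy_eq_of_mem_normalizedSet μ ω h f p α hψ,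
    energy_eq_of_mem_normalizedSet μ ω h f p α hφhat]
  exact hmin hψ

/-- **The infimum of the energy functional is attained**: there is `φ̂ ≥ 0`
with `∫_V f φ̂^α dμ = 1` (in particular `φ̂ ≢ 0`) and
`I(φ̂) = β = inf {I(φ) : φ ≥ 0, φ ≢ 0}`. -/
theorem energy_infimum_attained
    {V : Type*} [Fintype V] [Nonempty V]
    (μ : V → ℝ) (hμ : ∀ i, 0 < μ i)
    (ω : V → V → ℝ) (hωsym : ∀ i j, ω i j = ω j i)
    (hωnonneg : ∀ i j, 0 ≤ ω i j) (hωloop : ∀ i, ω i i = 0)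
    (h f : V → ℝ) (hf : ∀ i, 0 < f i)
    (p α : ℝ) (hp : 1 < p) (hpα : p ≤ α) :
    ∃ φhat : V → ℝ, (∀ i, 0 ≤ φhat i) ∧
      (∑ i, μ i * (f i * φhat i ^ α) = 1) ∧
      energy μ ω h f p α φhat =
        sInf {y : ℝ | ∃ φ : V → ℝ, (∀ i, 0 ≤ φ i) ∧ φ ≠ 0 ∧
          energy μ ω h f p α φ = y} :=
  energy_infimum_attained_general μ hμ ω h f hf p α hp hpα
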